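/- arXiv:1803.09737 — 3 statements merged into one kernel-verified Lean document; each statement's English description precedes it below -/
import Mathlib

section
/- Let f : ℝ^p → ℝ be differentiable with m-strongly monotone gradient (m > 0), w_k ≥ 0 weights with w = Σ_k w_k, and let T(x₁,…,x_K) = argmin_θ { (1/2)Σ_k w_k‖θ - x_k‖² + f(θ) }. Then for any two inputs (x_k) and (x_k'), ‖T(x) - T(x')‖ ≤ (w/(m+w)) · max_k ‖x_k - x_k'‖. -/
open RealInnerProductSpace

/-!
At a minimiser `u` of `θ ↦ ½ ∑ₖ wₖ‖θ - xₖ‖² + f θ` the gradient vanishes, i.e.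
`W • u + ∇f u = ∑ₖ wₖ • xₖ`: the update is the inverse of the operator `θ ↦ W • θ + ∇f θ`,
applied to the weighted sum of the inputs. That operator is `(m + W)`-strongly monotone,
so its inverse is `1 / (m + W)`-Lipschitz, while the weighted sum moves by at most
`W · maxₖ ‖xₖ - xₖ'‖`.
-/

section

variable {E : Type*} [NormedAddCommGroup E] [InnerProductSpace ℝ E]

theorem mul_norm_le_norm_of_mul_norm_sq_le_inner {c : ℝ} {g d : E}
    (h : c * ‖d‖ ^ 2 ≤ ⟪g, d⟫) : c * ‖d‖ ≤ ‖g‖ := by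
  rcases (norm_nonneg d).eq_or_lt with hd | hd
  · simp [← hd]
  · refine le_of_mul_le_mul_right ?_ hd
    calc c * ‖d‖ * ‖d‖ = c * ‖d‖ ^ 2 := by ring
      _ ≤ ⟪g, d⟫ := h
      _ ≤ ‖g‖ * ‖d‖ := real_inner_le_norm g d

theorem norm_sum_smul_le_of_norm_le {ι : Type*} {s : Finset ι} {w : ι → ℝ} {y : ι → E}
    {M : ℝ}
    (hw : ∀ k ∈ s, 0 ≤ w k) (hy : ∀ k ∈ s, ‖y k‖ ≤ M) :
    ‖∑ k ∈ s, w k • y k‖ ≤ (∑ k ∈ s, w k) * M := by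
  rw [Finset.sum_mul]
  refine (norm_sum_le _ _).trans (Finset.sum_le_sum fun k hk => ?_)
  rw [norm_smul, Real.norm_of_nonneg (hw k hk)]
  exact mul_le_mul_of_nonneg_left (hy k hk) (hw k hk)

variable [CompleteSpace E] {ι : Type*} [Fintype ι]

theorem hasGradientAt_half_weighted_sum_sq_dist (w : ι → ℝ) (x : ι → E) (θ : E) :
    HasGradientAt (fun θ => (1 / 2) * ∑ k, w k * ‖θ - x k‖ ^ 2)
      (∑ k, w k • (θ - x k)) θ := by
  rw [hasGradientAt_iff_hasFDerivAt]
  refine ((HasFDerivAt.fun_sum (u := Finset.univ) fun k _ =>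
    ((hasFDerivAt_id θ).sub_const (x k)).norm_sq.const_mul (w k)).const_mul
      (1 / 2 : ℝ)).congr_fderiv ?_
  ext v
  simp only [smul_apply, sum_apply, ContinuousLinearMap.comp_apply,
    InnerProductSpace.toDual_apply_apply, sum_inner, inner_smul_left,
    innerSL_apply_apply, ContinuousLinearMap.id_apply, id_eq, smul_eq_mul, nsmul_eq_mul,
    Finset.mul_sum, RCLike.conj_to_real]
  exact Finset.sum_congr rfl fun k _ => by push_cast; ring

theorem sum_smul_add_gradient_eq_of_isMinOn {f : E → ℝ} {w : ι → ℝ} {x : ι → E} {u : E}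
    (hf : DifferentiableAt ℝ f u)
    (hu : IsMinOn (fun θ => (1 / 2) * ∑ k, w k * ‖θ - x k‖ ^ 2 + f θ) Set.univ u) :
    (∑ k, w k) • u + gradient f u = ∑ k, w k • x k := by
  have hcrit := (hu.isLocalMin Filter.univ_mem).hasFDerivAt_eq_zero <|
    (hasGradientAt_half_weighted_sum_sq_dist w x u).hasFDerivAt.add hf.hasGradientAt.hasFDerivAt
  rw [← map_add, LinearIsometryEquiv.map_eq_zero_iff] at hcrit
  simp only [smul_sub, Finset.sum_sub_distrib, ← Finset.sum_smul] at hcrit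
  rw [← sub_eq_zero, ← hcrit]
  abel

end

theorem djam_stmt12 (p K : ℕ) (hK : 0 < K)
    (f : EuclideanSpace ℝ (Fin p) → ℝ) (hf : Differentiable ℝ f)
    (m : ℝ) (hm : 0 < m)
    (hmono : ∀ x y, ⟪gradient f x - gradient f y, x - y⟫ ≥ m * ‖x - y‖ ^ 2)
    (w : Fin K → ℝ) (hw : ∀ k, 0 ≤ w k) (W : ℝ) (hW : W = ∑ k, w k)
    (T : (Fin K → EuclideanSpace ℝ (Fin p)) → EuclideanSpace ℝ (Fin p))
    (hT : ∀ x θ,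
      (1 / 2) * ∑ k, w k * ‖T x - x k‖ ^ 2 + f (T x) ≤
      (1 / 2) * ∑ k, w k * ‖θ - x k‖ ^ 2 + f θ) :
    haveI : Nonempty (Fin K) := Fin.pos_iff_nonempty.mp hK
    ∀ x x' : Fin K → EuclideanSpace ℝ (Fin p),
      ‖T x - T x'‖ ≤
        (W / (m + W)) *
          Finset.univ.sup' Finset.univ_nonempty (fun k => ‖x k - x' k‖) := by
  have : Nonempty (Fin K) := Fin.pos_iff_nonempty.mp hK
  intro x x'
  have hW0 : 0 ≤ W := hW ▸ Finset.sum_nonneg fun k _ => hw k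
  have hsolve : ∀ x, W • T x + gradient f (T x) = ∑ k, w k • x k := fun x =>
    hW ▸ sum_smul_add_gradient_eq_of_isMinOn (hf _) fun θ _ => hT x θ
  have hinput : ∑ k, w k • (x k - x' k) =
      W • (T x - T x') + (gradient f (T x) - gradient f (T x')) := by
    simp only [smul_sub, Finset.sum_sub_distrib, ← hsolve]
    abel
  have hlower : (m + W) * ‖T x - T x'‖ ≤ ‖∑ k, w k • (x k - x' k)‖ := by
    refine mul_norm_le_norm_of_mul_norm_sq_le_inner ?_
    rw [hinput, inner_add_left, real_inner_smul_left, real_inner_self_eq_norm_sq]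
    linarith [hmono (T x) (T x')]
  have hupper : ‖∑ k, w k • (x k - x' k)‖ ≤
      W * Finset.univ.sup' Finset.univ_nonempty (fun k => ‖x k - x' k‖) :=
    hW ▸ norm_sum_smul_le_of_norm_le (fun k _ => hw k) fun k hk =>
      Finset.le_sup' (fun k => ‖x k - x' k‖) hk
  rw [div_mul_eq_mul_div, le_div_iff₀ (by linarith)]
  linarith
end

section
/- Consider the synchronous DJAM iteration on the state vector Θ(t) with blocks Θ_j^k, where every node j updates Θ_j(t+1) = (∇F_j)⁻¹(Σ_{k∈N_j} W_{jk}Θ_j^k(t)) with F_j(x) = f_j(x) + (w_j/2)‖x‖², and all blocks are updated at every step. Then V(t) := max over blocks of ‖Θ_j^k(t) − Θ_k*‖ satisfies V(t+1) ≤ β V(t) with β = max_j w_j/(m_j + w_j) < 1, hence V(t) ≤ β^t V(0) and the iteration converges linearly to Θ*. -/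
open RealInnerProductSpace

theorem djam_stmt13 (p n : ℕ) (hn : 0 < n)
    (f : Fin n → EuclideanSpace ℝ (Fin p) → ℝ)
    (hf : ∀ i, Differentiable ℝ (f i))
    (m : Fin n → ℝ) (hm : ∀ i, 0 < m i)
    (hmono : ∀ i x y,
      ⟪gradient (f i) x - gradient (f i) y, x - y⟫ ≥ m i * ‖x - y‖ ^ 2)
    (W : Fin n → Fin n → ℝ) (hWsymm : ∀ i j, W i j = W j i)
    (hWnonneg : ∀ i j, 0 ≤ W i j) (hWdiag : ∀ i, W i i = 0)
    (w : Fin n → ℝ)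
    (hw : ∀ k, w k = ∑ l ∈ Finset.univ.filter (fun l => 0 < W k l), W k l)
    (Θ : ℕ → Fin n → Fin n → EuclideanSpace ℝ (Fin p))
    (hupd : ∀ t (j k : Fin n),
      gradient (f k) (Θ (t + 1) j k) + w k • Θ (t + 1) j k =
        ∑ l ∈ Finset.univ.filter (fun l => 0 < W k l), W k l • Θ t k l)
    (Θs : Fin n → EuclideanSpace ℝ (Fin p))
    (hstar : ∀ k, gradient (f k) (Θs k) + w k • Θs k =
        ∑ l ∈ Finset.univ.filter (fun l => 0 < W k l), W k l • Θs l)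
    (V : ℕ → ℝ)
    (hV : ∀ t, V t =
      haveI : Nonempty (Fin n) := Fin.pos_iff_nonempty.mp hn
      Finset.univ.sup' Finset.univ_nonempty
        (fun jk : Fin n × Fin n => ‖Θ t jk.1 jk.2 - Θs jk.2‖))
    (β : ℝ)
    (hβ : β =
      haveI : Nonempty (Fin n) := Fin.pos_iff_nonempty.mp hn
      Finset.univ.sup' Finset.univ_nonempty (fun j => w j / (m j + w j))) :
    β < 1 ∧ (∀ t, V (t + 1) ≤ β * V t) ∧ (∀ t, V t ≤ β ^ t * V 0) ∧
    ∀ j k, Filter.Tendsto (fun t => Θ t j k) Filter.atTop (nhds (Θs k)) := by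
  haveI : Nonempty (Fin n) := Fin.pos_iff_nonempty.mp hn
  have hwnn : ∀ k, 0 ≤ w k := by
    intro k
    rw [hw k]
    exact Finset.sum_nonneg fun l _ => hWnonneg k l
  have hden : ∀ k, 0 < m k + w k := fun k => add_pos_of_pos_of_nonneg (hm k) (hwnn k)
  have hβ1 : β < 1 := by
    rw [hβ]
    rw [Finset.sup'_lt_iff]
    intro j _
    rw [div_lt_one (hden j)]
    linarith [hm j, hwnn j]
  have hβk : ∀ k, w k / (m k + w k) ≤ β := by
    intro k
    rw [hβ]
    exact Finset.le_sup' (fun j => w j / (m j + w j)) (Finset.mem_univ k)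
  have hβ0 : 0 ≤ β :=
    le_trans (div_nonneg (hwnn (Classical.arbitrary _)) (hden _).le) (hβk _)
  have hVle : ∀ t (j k : Fin n), ‖Θ t j k - Θs k‖ ≤ V t := by
    intro t j k
    rw [hV t]
    exact Finset.le_sup' (fun jk : Fin n × Fin n => ‖Θ t jk.1 jk.2 - Θs jk.2‖)
      (Finset.mem_univ (j, k))
  have hV0 : ∀ t, 0 ≤ V t := fun t =>
    le_trans (norm_nonneg _) (hVle t (Classical.arbitrary _) (Classical.arbitrary _))
  have hstep : ∀ t, V (t + 1) ≤ β * V t := by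
    intro t
    rw [hV (t + 1)]
    refine Finset.sup'_le _ _ fun jk _ => ?_
    obtain ⟨j, k⟩ := jk
    set x := Θ (t + 1) j k with hx
    set y := Θs k with hy
    set d := x - y with hd
    have heq : gradient (f k) x - gradient (f k) y + w k • d =
        ∑ l ∈ Finset.univ.filter (fun l => 0 < W k l), W k l • (Θ t k l - Θs l) := by
      have h1 := hupd t j k
      have h2 := hstar k
      rw [Finset.sum_congr rfl (fun l _ => smul_sub (W k l) (Θ t k l) (Θs l)),
        Finset.sum_sub_distrib, ← h1, ← h2, hd, smul_sub]
      abel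
    have hinner : ⟪gradient (f k) x - gradient (f k) y, d⟫ + w k * ‖d‖ ^ 2 =
        ∑ l ∈ Finset.univ.filter (fun l => 0 < W k l), W k l * ⟪Θ t k l - Θs l, d⟫ := by
      have := congrArg (fun v => (⟪v, d⟫ : ℝ)) heq
      simp only [inner_add_left, real_inner_smul_left, sum_inner,
        real_inner_self_eq_norm_sq] at this
      exact this
    have hub : ∑ l ∈ Finset.univ.filter (fun l => 0 < W k l), W k l * ⟪Θ t k l - Θs l, d⟫ ≤
        w k * (V t * ‖d‖) := by
      rw [hw k, Finset.sum_mul]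
      refine Finset.sum_le_sum fun l _ => ?_
      refine mul_le_mul_of_nonneg_left ?_ (hWnonneg k l)
      calc ⟪Θ t k l - Θs l, d⟫ ≤ ‖Θ t k l - Θs l‖ * ‖d‖ := real_inner_le_norm _ _
        _ ≤ V t * ‖d‖ := mul_le_mul_of_nonneg_right (hVle t k l) (norm_nonneg _)
    have hkey : (m k + w k) * ‖d‖ ^ 2 ≤ w k * (V t * ‖d‖) := by
      have := hmono k x y
      nlinarith [hinner, hub]
    rcases eq_or_lt_of_le (norm_nonneg d) with h0 | h0
    · rw [← h0]
      exact mul_nonneg hβ0 (hV0 t)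
    · have hwk : w k ≤ β * (m k + w k) := by
        have := hβk k
        rwa [div_le_iff₀ (hden k)] at this
      have h1 : w k * (V t * ‖d‖) ≤ β * (m k + w k) * (V t * ‖d‖) :=
        mul_le_mul_of_nonneg_right hwk (mul_nonneg (hV0 t) (norm_nonneg d))
      have h2 : (m k + w k) * (‖d‖ * ‖d‖) ≤ (m k + w k) * (β * V t * ‖d‖) := by
        nlinarith [hkey, h1]
      have h3 : ‖d‖ * ‖d‖ ≤ β * V t * ‖d‖ := le_of_mul_le_mul_left h2 (hden k)
      exact le_of_mul_le_mul_right h3 h0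
  have hgeo : ∀ t, V t ≤ β ^ t * V 0 := by
    intro t
    induction t with
    | zero => simp
    | succ t ih =>
      calc V (t + 1) ≤ β * V t := hstep t
        _ ≤ β * (β ^ t * V 0) := mul_le_mul_of_nonneg_left ih hβ0
        _ = β ^ (t + 1) * V 0 := by ring
  refine ⟨hβ1, hstep, hgeo, fun j k => ?_⟩
  rw [tendsto_iff_norm_sub_tendsto_zero]
  have hlim : Filter.Tendsto (fun t => β ^ t * V 0) Filter.atTop (nhds 0) := by
    simpa using (tendsto_pow_atTop_nhds_zero_of_lt_one hβ0 hβ1).mul_const (V 0)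
  refine squeeze_zero (fun t => norm_nonneg _) (fun t => ?_) hlim
  exact le_trans (hVle t j k) (hgeo t)
end

section
/- Under the updates of Theorem 1, if at round t edge (i,j) is selected and Θ_i^j(t+1) = (∇F_j)⁻¹(Σ_{k∈N_j} W_{jk} Θ_j^k(t)), while all non-updated blocks stay unchanged, then V(t+1) ≤ V(t), where V(t) = max_{(l,k)} ‖Θ_l^k(t) - Θ_k*‖. -/
open RealInnerProductSpace

theorem djam_stmt14 (p n : ℕ) (hn : 0 < n)
    (f : Fin n → EuclideanSpace ℝ (Fin p) → ℝ)
    (hf : ∀ i, Differentiable ℝ (f i))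
    (m : Fin n → ℝ) (hm : ∀ i, 0 < m i)
    (hmono : ∀ i x y,
      ⟪gradient (f i) x - gradient (f i) y, x - y⟫ ≥ m i * ‖x - y‖ ^ 2)
    (W : Fin n → Fin n → ℝ) (hWsymm : ∀ i j, W i j = W j i)
    (hWnonneg : ∀ i j, 0 ≤ W i j) (hWdiag : ∀ i, W i i = 0)
    (w : Fin n → ℝ)
    (hw : ∀ k, w k = ∑ l ∈ Finset.univ.filter (fun l => 0 < W k l), W k l)
    (Θs : Fin n → EuclideanSpace ℝ (Fin p))
    (hstar : ∀ k, gradient (f k) (Θs k) + w k • Θs k =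
        ∑ l ∈ Finset.univ.filter (fun l => 0 < W k l), W k l • Θs l)
    (t : ℕ) (Θ : ℕ → Fin n → Fin n → EuclideanSpace ℝ (Fin p))
    (i j : Fin n) (hedge : 0 < W i j)
    (hupd : gradient (f j) (Θ (t + 1) i j) + w j • Θ (t + 1) i j =
        ∑ k ∈ Finset.univ.filter (fun k => 0 < W j k), W j k • Θ t j k)
    (hfix : ∀ l k : Fin n, (l, k) ≠ (i, j) → Θ (t + 1) l k = Θ t l k)
    (V : ℕ → ℝ)
    (hV : ∀ s, V s =
      haveI : Nonempty (Fin n) := Fin.pos_iff_nonempty.mp hn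
      Finset.univ.sup' Finset.univ_nonempty
        (fun lk : Fin n × Fin n => ‖Θ s lk.1 lk.2 - Θs lk.2‖)) :
    V (t + 1) ≤ V t := by

  haveI : Nonempty (Fin n) := Fin.pos_iff_nonempty.mp hn
  set Θ' := Θ (t + 1) i j with hΘ'
  set d := Θ' - Θs j with hd
  have hterm : ∀ l k : Fin n, ‖Θ t l k - Θs k‖ ≤ V t := by
    intro l k
    rw [hV t]
    exact Finset.le_sup' (fun lk : Fin n × Fin n => ‖Θ t lk.1 lk.2 - Θs lk.2‖)
      (Finset.mem_univ (l, k))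
  have hVt0 : 0 ≤ V t := le_trans (norm_nonneg _) (hterm i j)
  have hwj : 0 ≤ w j := by
    rw [hw j]; exact Finset.sum_nonneg fun k _ => hWnonneg j k
  have key : ‖d‖ ≤ V t := by
    have heq : (gradient (f j) Θ' - gradient (f j) (Θs j)) + w j • d =
        ∑ k ∈ Finset.univ.filter (fun k => 0 < W j k), W j k • (Θ t j k - Θs k) := by
      have hsplit : ∑ k ∈ Finset.univ.filter (fun k => 0 < W j k), W j k • (Θ t j k - Θs k)
          = (∑ k ∈ Finset.univ.filter (fun k => 0 < W j k), W j k • Θ t j k)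
            - ∑ k ∈ Finset.univ.filter (fun k => 0 < W j k), W j k • Θs k := by
        rw [← Finset.sum_sub_distrib]
        exact Finset.sum_congr rfl fun k _ => smul_sub _ _ _
      rw [hsplit, ← hupd, ← hstar j, hd, smul_sub]
      abel
    have hinner := congrArg (fun x => ⟪x, d⟫) heq
    simp only [inner_add_left, inner_sub_left, sum_inner, real_inner_smul_left,
      real_inner_self_eq_norm_sq] at hinner
    have hlhs : m j * ‖d‖ ^ 2 + w j * ‖d‖ ^ 2 ≤
        ⟪gradient (f j) Θ', d⟫ - ⟪gradient (f j) (Θs j), d⟫ + w j * ‖d‖ ^ 2 := by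
      have := hmono j Θ' (Θs j)
      rw [← hd] at this
      rw [← inner_sub_left]
      linarith
    have hrhs : (∑ k ∈ Finset.univ.filter (fun k => 0 < W j k),
          W j k * ⟪Θ t j k - Θs k, d⟫) ≤ w j * (V t * ‖d‖) := by
      rw [hw j, Finset.sum_mul]
      apply Finset.sum_le_sum
      intro k hk
      have h1 : ⟪Θ t j k - Θs k, d⟫ ≤ ‖Θ t j k - Θs k‖ * ‖d‖ :=
        real_inner_le_norm _ _
      have h2 : ‖Θ t j k - Θs k‖ * ‖d‖ ≤ V t * ‖d‖ :=
        mul_le_mul_of_nonneg_right (hterm j k) (norm_nonneg _)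
      have h3 := (hWnonneg j k)
      nlinarith
    have hcomb : (m j + w j) * ‖d‖ ^ 2 ≤ w j * (V t * ‖d‖) := by
      rw [hinner] at hlhs
      simp only [inner_sub_left] at hrhs
      nlinarith
    by_contra hcon
    push_neg at hcon
    have hdpos : 0 < ‖d‖ := lt_of_le_of_lt hVt0 hcon
    nlinarith [mul_nonneg (mul_nonneg hwj hdpos.le) (sub_pos.mpr hcon).le,
      mul_pos (hm j) (mul_pos hdpos hdpos)]
  rw [hV (t + 1)]
  apply Finset.sup'_le
  intro lk _
  rcases eq_or_ne lk (i, j) with h | h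
  · rw [h]
    exact key
  · rw [hfix lk.1 lk.2 (by simpa using h)]
    exact hterm lk.1 lk.2
end
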